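/- Let A be a simple finite-dimensional algebra over a field F of characteristic zero with a comultiplication Δ such that the Drinfeld double D(A) is a direct sum A₁ ⊕ A₂ of two proper simple ideals, let φ₁, φ₂ : A* → A be the linear maps with f − φᵢ(f) ∈ Aᵢ for all f ∈ A*, and let ψ : A → A* be the linear bijection with a = −φ₁(ψ(a)) + φ₂(ψ(a)) for all a ∈ A. Then the operator R : A → A defined by R(a) = φ₁(ψ(a)) is a Rota–Baxter operator of weight 1 on A. -/

import Mathlib

open TensorProduct

/-- `I` is a (two-sided) ideal for the product `prod`. -/
def IsIdealP {F M : Type*} [Field F] [AddCommGroup M] [Module F M]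
    (prod : M → M → M) (I : Submodule F M) : Prop :=
  ∀ x ∈ I, ∀ y : M, prod x y ∈ I ∧ prod y x ∈ I

/-- The ideal `I` is simple as an algebra with the restricted product. -/
def IsSimpleIdealP {F M : Type*} [Field F] [AddCommGroup M] [Module F M]
    (prod : M → M → M) (I : Submodule F M) : Prop :=
  (∃ x ∈ I, ∃ y ∈ I, prod x y ≠ 0) ∧
    ∀ J : Submodule F M, J ≤ I →
      (∀ x ∈ J, ∀ y ∈ I, prod x y ∈ J ∧ prod y x ∈ J) → J = ⊥ ∨ J = I

/-- The multiplication of the Drinfeld double `D(A) = A ⊕ A*` associated with the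
bilinear product `mul` and the comultiplication `Δ`:
`(a + f)(b + g) = (ab + f⇀b + a↼g) + (fg + f⇽b + a⇁g)`. -/
noncomputable def dmul {F A : Type*} [Field F] [AddCommGroup A] [Module F A]
    (mul : A →ₗ[F] A →ₗ[F] A) (Δ : A →ₗ[F] A ⊗[F] A)
    (p q : A × Module.Dual F A) : A × Module.Dual F A :=
  (mul p.1 q.1
      + TensorProduct.rid F A (LinearMap.lTensor A p.2 (Δ q.1))
      + TensorProduct.lid F A (LinearMap.rTensor A q.2 (Δ p.1)),
    Δ.dualMap (TensorProduct.dualDistrib F A A (p.2 ⊗ₜ[F] q.2))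
      + p.2.comp (mul q.1)
      + q.2.comp (mul.flip p.1))

/-- `R` is a Rota–Baxter operator of weight `lam` for the bilinear product `mul`. -/
def IsRotaBaxter {F L : Type*} [Field F] [AddCommGroup L] [Module F L]
    (mul : L →ₗ[F] L →ₗ[F] L) (R : L → L) (lam : F) : Prop :=
  ∀ x y : L, mul (R x) (R y) = R (mul (R x) y + mul x (R y) + lam • mul x y)

/-!
The ideals `A₁` and `A₂` annihilate each other, so the projection `P` of `D(A)` onto `A₁` along
`A₂` is multiplicative. Writing `R = φ₁ ∘ ψ` and `u a = (-R a, ψ a) ∈ A₁`, the choice of `ψ` gives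
`(a, 0) = u a - (-φ₂ (ψ a), ψ a)`, hence `P (a, 0) = u a`, so `u (ab) = u a · u b`, and also
`u a · (b, 0) = u a · u b = (a, 0) · u b`. The `A`-components of the last two products say
`ψ a ⇀ b = R a · b - R (ab)` and `a ↼ ψ b = a · R b - R (ab)`; substituting these into the
`A`-component of `u a · u b = u (ab)` gives the Rota–Baxter identity of weight 1.
-/

section ComplementaryIdeals

variable {F M : Type*} [Field F] [AddCommGroup M] [Module F M]
  {prod : M →ₗ[F] M →ₗ[F] M} {I₁ I₂ : Submodule F M}

lemma IsIdealP.mul_eq_zero_of_disjoint (h₁ : IsIdealP (fun x y => prod x y) I₁)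
    (h₂ : IsIdealP (fun x y => prod x y) I₂) (hd : Disjoint I₁ I₂)
    {x y : M} (hx : x ∈ I₁) (hy : y ∈ I₂) : prod x y = 0 ∧ prod y x = 0 :=
  ⟨Submodule.disjoint_def.mp hd _ (h₁ x hx y).1 (h₂ y hy x).2,
    Submodule.disjoint_def.mp hd _ (h₁ x hx y).2 (h₂ y hy x).1⟩

lemma IsIdealP.projection_mul (h₁ : IsIdealP (fun x y => prod x y) I₁)
    (h₂ : IsIdealP (fun x y => prod x y) I₂) (hc : IsCompl I₁ I₂) (x y : M) :
    I₁.projection I₂ hc (prod x y) =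
      prod (I₁.projection I₂ hc x) (I₁.projection I₂ hc y) := by
  set P := I₁.projection I₂ hc
  set Q := I₂.projection I₁ hc.symm
  have hP : ∀ z, P z ∈ I₁ := Submodule.projection_apply_mem hc
  have hQ : ∀ z, Q z ∈ I₂ := Submodule.projection_apply_mem hc.symm
  have hcross (z w : M) := h₁.mul_eq_zero_of_disjoint h₂ hc.disjoint (hP z) (hQ w)
  have hsplit : prod x y = prod (P x) (P y) + prod (Q x) (Q y) := calc
    prod x y = prod (P x + Q x) (P y + Q y) := by
      simp only [P, Q, Submodule.projection_add_projection_eq_self]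
    _ = prod (P x) (P y) + prod (Q x) (Q y) := by
      simp only [map_add, LinearMap.add_apply, (hcross x y).1, (hcross y x).2, add_zero,
        zero_add]
  rw [hsplit, map_add, Submodule.projection_apply_of_mem_left hc (h₁ _ (hP x) _).1,
    Submodule.projection_apply_of_mem_right hc (h₂ _ (hQ x) _).1, add_zero]

lemma IsIdealP.mul_projection_of_mem (h₁ : IsIdealP (fun x y => prod x y) I₁)
    (h₂ : IsIdealP (fun x y => prod x y) I₂) (hc : IsCompl I₁ I₂) {x : M} (hx : x ∈ I₁)
    (y : M) :
    prod x y = prod x (I₁.projection I₂ hc y) ∧ prod y x = prod (I₁.projection I₂ hc y) x := by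
  obtain ⟨hxy, hyx⟩ : prod x y ∈ I₁ ∧ prod y x ∈ I₁ := h₁ x hx y
  have hPx := Submodule.projection_apply_of_mem_left hc hx
  constructor
  · rw [← Submodule.projection_apply_of_mem_left hc hxy, h₁.projection_mul h₂, hPx]
  · rw [← Submodule.projection_apply_of_mem_left hc hyx, h₁.projection_mul h₂, hPx]

end ComplementaryIdeals

section DrinfeldDouble

variable {F A : Type*} [Field F] [AddCommGroup A] [Module F A]
  (mul : A →ₗ[F] A →ₗ[F] A) (Δ : A →ₗ[F] A ⊗[F] A)

noncomputable def dmulₗ :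
    A × Module.Dual F A →ₗ[F] A × Module.Dual F A →ₗ[F] A × Module.Dual F A :=
  LinearMap.mk₂ F (dmul mul Δ)
    (fun p p' q => by
      simp only [dmul, Prod.fst_add, Prod.snd_add, map_add, LinearMap.add_apply,
        LinearMap.lTensor_add, LinearMap.add_comp, LinearMap.comp_add, add_tmul, Prod.mk_add_mk,
        Prod.mk.injEq]
      constructor <;> abel)
    (fun c p q => by
      simp only [dmul, Prod.smul_fst, Prod.smul_snd, map_smul, LinearMap.smul_apply,
        LinearMap.lTensor_smul, LinearMap.smul_comp, LinearMap.comp_smul, ← smul_tmul',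
        Prod.smul_mk, smul_add])
    (fun p q q' => by
      simp only [dmul, Prod.fst_add, Prod.snd_add, map_add, LinearMap.add_apply,
        LinearMap.rTensor_add, LinearMap.comp_add, LinearMap.add_comp, tmul_add, Prod.mk_add_mk,
        Prod.mk.injEq]
      constructor <;> abel)
    (fun c p q => by
      simp only [dmul, Prod.smul_fst, Prod.smul_snd, map_smul, LinearMap.smul_apply,
        LinearMap.rTensor_smul, LinearMap.comp_smul, LinearMap.smul_comp, tmul_smul,
        Prod.smul_mk, smul_add])

lemma dmul_mk_zero_mk_zero (a b : A) :
    dmul mul Δ (a, 0) (b, 0) = (mul a b, 0) := by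
  simp [dmul]

variable {mul Δ} in
lemma isRotaBaxter_of_dmul (R : A →ₗ[F] A) (f : A →ₗ[F] Module.Dual F A)
    (hmul : ∀ a b, dmul mul Δ (-R a, f a) (-R b, f b) = (-R (mul a b), f (mul a b)))
    (hmul_left : ∀ a b, dmul mul Δ (-R a, f a) (b, 0) = (-R (mul a b), f (mul a b)))
    (hmul_right : ∀ a b, dmul mul Δ (a, 0) (-R b, f b) = (-R (mul a b), f (mul a b))) :
    IsRotaBaxter mul R 1 := by
  have hleft (a b : A) :
      TensorProduct.rid F A (LinearMap.lTensor A (f a) (Δ b)) = mul (R a) b - R (mul a b) := by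
    have h := congrArg Prod.fst (hmul_left a b)
    simp only [dmul, map_neg, LinearMap.neg_apply, LinearMap.rTensor_zero,
      LinearMap.zero_apply, map_zero] at h
    linear_combination (norm := module) h
  have hright (a b : A) :
      TensorProduct.lid F A (LinearMap.rTensor A (f b) (Δ a)) = mul a (R b) - R (mul a b) := by
    have h := congrArg Prod.fst (hmul_right a b)
    simp only [dmul, map_neg, LinearMap.lTensor_zero,
      LinearMap.zero_apply, map_zero] at h
    linear_combination (norm := module) h
  intro x y
  have h := congrArg Prod.fst (hmul x y)
  simp only [dmul, map_neg, LinearMap.neg_apply, hleft, hright] at h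
  rw [one_smul, map_add, map_add]
  linear_combination (norm := module) -h

end DrinfeldDouble

theorem stmt7_general {F A : Type*} [Field F] [AddCommGroup A] [Module F A]
    (mul : A →ₗ[F] A →ₗ[F] A)
    -- a comultiplication on `A`
    (Δ : A →ₗ[F] A ⊗[F] A)
    -- `D(A) = A₁ ⊕ A₂`, a direct sum of two proper simple ideals
    (A₁ A₂ : Submodule F (A × Module.Dual F A))
    (hcompl : IsCompl A₁ A₂)
    (hid1 : IsIdealP (dmul mul Δ) A₁) (hid2 : IsIdealP (dmul mul Δ) A₂)
    -- the linear maps `φᵢ` with `f - φᵢ(f) ∈ Aᵢ` for all `f ∈ A*`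
    (φ₁ φ₂ : Module.Dual F A →ₗ[F] A)
    (hφ1 : ∀ f : Module.Dual F A, ((-φ₁ f, f) : A × Module.Dual F A) ∈ A₁)
    (hφ2 : ∀ f : Module.Dual F A, ((-φ₂ f, f) : A × Module.Dual F A) ∈ A₂)
    -- the linear bijection `ψ` with `a = -φ₁(ψ a) + φ₂(ψ a)` for all `a ∈ A`
    (ψ : A →ₗ[F] Module.Dual F A)
    (hψ : ∀ c : A, c = -φ₁ (ψ c) + φ₂ (ψ c))
    :
    IsRotaBaxter mul (fun c => φ₁ (ψ c)) (1 : F) := by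
  have hA₁ : IsIdealP (fun p q => dmulₗ mul Δ p q) A₁ := hid1
  have hA₂ : IsIdealP (fun p q => dmulₗ mul Δ p q) A₂ := hid2
  have hproj (a : A) : A₁.projection A₂ hcompl (a, 0) = (-(φ₁ ∘ₗ ψ) a, ψ a) := by
    have hsplit : ((a, 0) : A × Module.Dual F A) = (-φ₁ (ψ a), ψ a) - (-φ₂ (ψ a), ψ a) := by
      refine Prod.ext ?_ (sub_self _).symm
      simp only [Prod.fst_sub, sub_neg_eq_add]
      exact hψ a
    rw [hsplit, map_sub, Submodule.projection_apply_of_mem_left hcompl (hφ1 _),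
      Submodule.projection_apply_of_mem_right hcompl (hφ2 _), sub_zero, LinearMap.comp_apply]
  have hmul (a b : A) : dmul mul Δ (-(φ₁ ∘ₗ ψ) a, ψ a) (-(φ₁ ∘ₗ ψ) b, ψ b) =
      (-(φ₁ ∘ₗ ψ) (mul a b), ψ (mul a b)) := by
    rw [← hproj, ← hproj, ← hproj, ← dmul_mk_zero_mk_zero]
    exact (hA₁.projection_mul hA₂ hcompl _ _).symm
  refine isRotaBaxter_of_dmul (φ₁ ∘ₗ ψ) ψ hmul (fun a b => ?_) (fun a b => ?_)
  · rw [← hmul, ← hproj b]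
    exact (hA₁.mul_projection_of_mem hA₂ hcompl (hφ1 _) _).1
  · rw [← hmul, ← hproj a]
    exact (hA₁.mul_projection_of_mem hA₂ hcompl (hφ1 _) _).2

theorem stmt7 {F A : Type*} [Field F] [CharZero F] [AddCommGroup A] [Module F A]
    [FiniteDimensional F A] (mul : A →ₗ[F] A →ₗ[F] A)
    -- `A` is simple
    (hsimple : (∃ x y : A, mul x y ≠ 0) ∧
      ∀ I : Submodule F A, (∀ x ∈ I, ∀ y : A, mul x y ∈ I ∧ mul y x ∈ I) → I = ⊥ ∨ I = ⊤)
    -- a comultiplication on `A`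
    (Δ : A →ₗ[F] A ⊗[F] A)
    -- `D(A) = A₁ ⊕ A₂`, a direct sum of two proper simple ideals
    (A₁ A₂ : Submodule F (A × Module.Dual F A))
    (h1b : A₁ ≠ ⊥) (h1t : A₁ ≠ ⊤) (h2b : A₂ ≠ ⊥) (h2t : A₂ ≠ ⊤)
    (hcompl : IsCompl A₁ A₂)
    (hid1 : IsIdealP (dmul mul Δ) A₁) (hid2 : IsIdealP (dmul mul Δ) A₂)
    (hs1 : IsSimpleIdealP (dmul mul Δ) A₁) (hs2 : IsSimpleIdealP (dmul mul Δ) A₂)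
    -- the linear maps `φᵢ` with `f - φᵢ(f) ∈ Aᵢ` for all `f ∈ A*`
    (φ₁ φ₂ : Module.Dual F A →ₗ[F] A)
    (hφ1 : ∀ f : Module.Dual F A, ((-φ₁ f, f) : A × Module.Dual F A) ∈ A₁)
    (hφ2 : ∀ f : Module.Dual F A, ((-φ₂ f, f) : A × Module.Dual F A) ∈ A₂)
    -- the linear bijection `ψ` with `a = -φ₁(ψ a) + φ₂(ψ a)` for all `a ∈ A`
    (ψ : A →ₗ[F] Module.Dual F A) (hψbij : Function.Bijective ψ)
    (hψ : ∀ c : A, c = -φ₁ (ψ c) + φ₂ (ψ c))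
    :
    IsRotaBaxter mul (fun c => φ₁ (ψ c)) (1 : F) :=
  stmt7_general mul Δ A₁ A₂ hcompl hid1 hid2 φ₁ φ₂ hφ1 hφ2 ψ hψ
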